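/- Let n ≥ 3 be odd, k ≥ 0, and 1 ≤ c < 2n(k+1)/(n-3) (no upper constraint on c when n = 3). The unicyclic graph G_{n,k,c}, consisting of an odd cycle on vertices a_1,...,a_n with k pendant vertices attached to each of a_1,...,a_{n-1} and k+c pendant vertices attached to a_n, is super edge-magic total and sm(G_{n,k,c}) = 2n(k+1) + 2c + (n+3)/2. -/

import Mathlib

/-- A super edge-magic total labeling of a graph `G` with `p = Fintype.card V` vertices and
`q = G.edgeSet.ncard` edges: `fv` maps the vertices bijectively onto `{1,…,p}`, `fe` maps the
edges bijectively onto `{p+1,…,p+q}` (so together they form a bijection of `V ∪ E` onto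
`{1,…,p+q}` with `f(V) = {1,…,p}`), and every edge `uv` satisfies `f(u)+f(v)+f(uv) = c`. -/
def IsSEMT {V : Type*} [Fintype V] (G : SimpleGraph V)
    (fv : V → ℕ) (fe : Sym2 V → ℕ) (c : ℕ) : Prop :=
  Set.BijOn fv Set.univ (Set.Icc 1 (Fintype.card V)) ∧
  Set.BijOn fe G.edgeSet
    (Set.Icc (Fintype.card V + 1) (Fintype.card V + G.edgeSet.ncard)) ∧
  ∀ u v, G.Adj u v → fv u + fv v + fe s(u, v) = c

/-- The unicyclic graph `G(n; k₁, …, kₙ)`: a cycle on `Fin n` (vertex `i` adjacent to `i+1 mod n`)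
with `k i` pendant vertices attached to the cycle vertex `i`. -/
def pendantCycle (n : ℕ) (k : Fin n → ℕ) :
    SimpleGraph (Fin n ⊕ Σ i : Fin n, Fin (k i)) :=
  SimpleGraph.fromRel (fun a b =>
    (∃ i j : Fin n, a = Sum.inl i ∧ b = Sum.inl j ∧ (i.val + 1) % n = j.val) ∨
    (∃ (i : Fin n) (j : Fin (k i)), a = Sum.inr ⟨i, j⟩ ∧ b = Sum.inl i))

/-!
Write `n = 2m + 1` and `q = n(k + 1) + c` (the number of vertices and of edges). Going around
the cycle, label its vertices `1, m + 2, 2, m + 3, …, m + 1`; the cycle edges then have sums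
`m + 2, …, m + n + 1`. The `j`-th of the first `k` pendants of every cycle vertex goes into the
block `n(j + 1) + [1, n]` of labels, placed so that its edge sum is `n(j + 1)` plus the sum of the
cycle edge leaving its host; the `c` surplus pendants come last. So the edge sums are the `q`
consecutive numbers from `(n + 3)/2` on, and the edge labels `2q + (n + 3)/2 - sum` complete a
super edge-magic total labelling.

Conversely, summing the magic condition over all edges gives
`q λ = 2q² + q + ∑ᵢ (deg aᵢ - 1) f(aᵢ) ≥ 2q² + q + (k + 1) n(n + 1)/2 + c`,
since the cycle labels are `n` distinct positive numbers; when `c(n - 3) < 2n(k + 1)` this forces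
`λ ≥ 2q + (n + 3)/2`.
-/

open Finset

lemma two_mul_sum_Icc (a b : ℕ) : 2 * ∑ x ∈ Icc (a + 1) (a + b), x = b * (2 * a + b + 1) := by
  induction b with
  | zero => simp
  | succ b ih =>
    rw [← add_assoc, sum_Icc_succ_top (by omega), mul_add, ih]
    ring

lemma card_mul_succ_le_two_mul_sum (s : Finset ℕ) (hs : 0 ∉ s) :
    #s * (#s + 1) ≤ 2 * ∑ x ∈ s, x := by
  induction s using Finset.induction_on_max with
  | empty => simp
  | insert a s hlt ih =>
    have ha : a ∉ s := fun h => (hlt a h).false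
    have hcard : #s + 1 ≤ a := by
      have hsub : s ⊆ Ico 1 a := fun x hx =>
        mem_Ico.2 ⟨Nat.pos_of_ne_zero fun h => hs (h ▸ mem_insert_of_mem hx), hlt x hx⟩
      have ha0 : a ≠ 0 := fun h => hs (h ▸ mem_insert_self a s)
      have := card_le_card hsub
      rw [Nat.card_Ico] at this
      omega
    rw [card_insert_of_notMem ha, sum_insert ha]
    nlinarith [ih fun h => hs (mem_insert_of_mem h)]

lemma card_mul_succ_le_two_mul_sum_of_injective {ι : Type*} [Fintype ι] {f : ι → ℕ}
    (hf : Function.Injective f) (hpos : ∀ i, f i ≠ 0) :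
    Fintype.card ι * (Fintype.card ι + 1) ≤ 2 * ∑ i, f i := by
  have := card_mul_succ_le_two_mul_sum (univ.image f) (by simpa using hpos)
  rwa [card_image_of_injective _ hf, sum_image fun i _ j _ h => hf h, card_univ] at this

lemma eq_and_eq_of_mul_add_eq {n j j' r r' : ℕ} (hr : r < n) (hr' : r' < n)
    (h : n * j + r = n * j' + r') : j = j' ∧ r = r' := by
  obtain rfl : j = j' := by
    by_contra hne
    rcases Nat.lt_or_gt_of_ne hne with hlt | hlt
    · nlinarith [Nat.mul_le_mul_left n hlt]
    · nlinarith [Nat.mul_le_mul_left n hlt]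
  exact ⟨rfl, by omega⟩

lemma Set.InjOn.bijOn_of_ncard_le {α β : Type*} {f : α → β} {s : Set α} {t : Set β}
    (hinj : s.InjOn f) (hmaps : Set.MapsTo f s t) (ht : t.Finite) (hcard : t.ncard ≤ s.ncard) :
    Set.BijOn f s t := by
  refine ⟨hmaps, hinj, ?_⟩
  rw [← Set.eq_of_subset_of_ncard_le hmaps.image_subset (by rwa [hinj.ncard_image]) ht]
  exact Set.surjOn_image f s

lemma sum_eq_sum_Icc_of_bijOn {α : Type*} [Fintype α] {f : α → ℕ} {a b : ℕ}
    (h : Set.BijOn f Set.univ (Set.Icc a b)) : ∑ x, f x = ∑ y ∈ Icc a b, y := by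
  rw [← coe_univ, ← coe_Icc] at h
  exact sum_nbij f h.mapsTo h.injOn h.surjOn fun _ _ => rfl

section EdgeSum

variable {V : Type*}

def edgeSum (f : V → ℕ) : Sym2 V → ℕ :=
  Sym2.lift ⟨fun u w => f u + f w, fun _ _ => add_comm _ _⟩

@[simp]
lemma edgeSum_mk (f : V → ℕ) (u w : V) : edgeSum f s(u, w) = f u + f w := rfl

/-- The edge with sum `x` gets the label `|V| + |E| + s - x`. -/
theorem exists_isSEMT_of_edgeSum [Fintype V] {G : SimpleGraph V} {f : V → ℕ} {s : ℕ}
    (hf : Set.BijOn f Set.univ (Set.Icc 1 (Fintype.card V)))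
    (hinj : G.edgeSet.InjOn (edgeSum f))
    (hmaps : Set.MapsTo (edgeSum f) G.edgeSet (Set.Ico s (s + G.edgeSet.ncard))) :
    ∃ fe, IsSEMT G f fe (Fintype.card V + G.edgeSet.ncard + s) := by
  refine ⟨fun e => Fintype.card V + G.edgeSet.ncard + s - edgeSum f e, hf, ?_,
    fun u v huv => ?_⟩
  · refine Set.InjOn.bijOn_of_ncard_le (fun e he e' he' h => hinj he he' ?_) (fun e he => ?_)
      (Set.finite_Icc _ _) (by simp)
    · have := hmaps he
      have := hmaps he'
      simp only [Set.mem_Ico] at *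
      omega
    · have := hmaps he
      simp only [Set.mem_Ico, Set.mem_Icc] at *
      omega
  · have := hmaps (G.mem_edgeSet.2 huv)
    simp only [Set.mem_Ico, edgeSum_mk] at *
    omega

end EdgeSum

lemma val_finRotate {n : ℕ} (a : Fin n) :
    (finRotate n a : ℕ) = if (a : ℕ) + 1 = n then (0 : ℕ) else (a : ℕ) + 1 := by
  obtain ⟨n, rfl⟩ : ∃ n', n = n' + 1 := ⟨n - 1, by have := a.pos; omega⟩
  simp [finRotate_apply, Fin.val_add_one, Fin.ext_iff]

lemma add_one_mod_eq_val_finRotate {n : ℕ} (a : Fin n) : ((a : ℕ) + 1) % n = finRotate n a := by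
  rw [val_finRotate]
  split_ifs with h
  · rw [h, Nat.mod_self]
  · exact Nat.mod_eq_of_lt (by omega)

namespace pendantCycle

variable {n : ℕ} {K : Fin n → ℕ}

def edge : Fin n ⊕ (Σ i, Fin (K i)) → Sym2 (Fin n ⊕ Σ i, Fin (K i))
  | .inl a => s(.inl a, .inl (finRotate n a))
  | .inr p => s(.inr p, .inl p.1)

lemma adj_inl_finRotate (hn : 2 ≤ n) (a : Fin n) :
    (pendantCycle n K).Adj (.inl a) (.inl (finRotate n a)) := by
  rw [pendantCycle, SimpleGraph.fromRel_adj]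
  refine ⟨fun h => ?_, .inl (.inl ⟨a, _, rfl, rfl, add_one_mod_eq_val_finRotate a⟩)⟩
  have := congrArg Fin.val (Sum.inl.inj h)
  rw [val_finRotate] at this
  split_ifs at this <;> omega

lemma adj_inr_inl (p : Σ i, Fin (K i)) : (pendantCycle n K).Adj (.inr p) (.inl p.1) := by
  rw [pendantCycle, SimpleGraph.fromRel_adj]
  exact ⟨Sum.inr_ne_inl, .inl (.inr ⟨p.1, p.2, rfl, rfl⟩)⟩

lemma finRotate_finRotate_ne (hn : 3 ≤ n) (a : Fin n) : finRotate n (finRotate n a) ≠ a := by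
  intro h
  have := congrArg Fin.val h
  rw [val_finRotate, val_finRotate] at this
  split_ifs at this <;> omega

lemma bijOn_edge (hn : 3 ≤ n) :
    Set.BijOn (edge (K := K)) Set.univ (pendantCycle n K).edgeSet := by
  refine ⟨?_, ?_, ?_⟩
  · rintro (a | p) -
    exacts [adj_inl_finRotate (by omega) a, adj_inr_inl p]
  · rintro (a | p) - (b | p') - h <;> simp only [edge, Sym2.eq_iff, Sum.inl.injEq, Sum.inr.injEq,
      reduceCtorEq, false_and, and_false, or_false] at h
    · rcases h with ⟨rfl, -⟩ | ⟨rfl, h⟩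
      · rfl
      · exact absurd h (finRotate_finRotate_ne hn b)
    · rw [h.1]
  · intro e he
    induction e using Sym2.ind with
    | h u w =>
    rw [SimpleGraph.mem_edgeSet, pendantCycle, SimpleGraph.fromRel_adj] at he
    rcases he.2 with (⟨a, b, rfl, rfl, hab⟩ | ⟨i, j, rfl, rfl⟩) |
      (⟨a, b, rfl, rfl, hab⟩ | ⟨i, j, rfl, rfl⟩)
    · obtain rfl : b = finRotate n a :=
        Fin.ext (hab.symm.trans (add_one_mod_eq_val_finRotate a))
      exact ⟨.inl a, trivial, rfl⟩
    · exact ⟨.inr ⟨i, j⟩, trivial, rfl⟩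
    · obtain rfl : b = finRotate n a :=
        Fin.ext (hab.symm.trans (add_one_mod_eq_val_finRotate a))
      exact ⟨.inl a, trivial, Sym2.eq_swap⟩
    · exact ⟨.inr ⟨i, j⟩, trivial, Sym2.eq_swap⟩

lemma ncard_edgeSet (hn : 3 ≤ n) :
    (pendantCycle n K).edgeSet.ncard = Fintype.card (Fin n ⊕ Σ i, Fin (K i)) := by
  rw [← (bijOn_edge hn).ncard_eq, Set.ncard_univ, Nat.card_eq_fintype_card]

-- Both sides are `∑ v, deg v * f v`.
lemma sum_edgeSum_edge (f : Fin n ⊕ (Σ i, Fin (K i)) → ℕ) :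
    ∑ v, edgeSum f (edge v) = ∑ v, f v + ∑ i, (K i + 1) * f (.inl i) := by
  have hcycle : ∑ a, f (.inl (finRotate n a)) = ∑ a, f (.inl a) :=
    Equiv.sum_comp (finRotate n) (fun a => f (.inl a))
  have hpendant : ∑ p : Σ i, Fin (K i), f (.inl p.1) = ∑ i, K i * f (.inl i) := by
    simp [Fintype.sum_sigma]
  simp only [Fintype.sum_sum_type, edge, edgeSum_mk, sum_add_distrib, hcycle, hpendant, add_mul,
    one_mul]
  ring

theorem card_mul_eq_of_isSEMT (hn : 3 ≤ n) {fv : Fin n ⊕ (Σ i, Fin (K i)) → ℕ}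
    {fe : Sym2 (Fin n ⊕ Σ i, Fin (K i)) → ℕ} {cf : ℕ}
    (h : IsSEMT (pendantCycle n K) fv fe cf) :
    Fintype.card (Fin n ⊕ Σ i, Fin (K i)) * cf =
      2 * Fintype.card (Fin n ⊕ Σ i, Fin (K i)) ^ 2 + Fintype.card (Fin n ⊕ Σ i, Fin (K i)) +
        ∑ i, (K i + 1) * fv (.inl i) := by
  obtain ⟨hfv, hfe, hmagic⟩ := h
  rw [ncard_edgeSet hn] at hfe
  set p := Fintype.card (Fin n ⊕ Σ i, Fin (K i))
  have hvertex : 2 * ∑ v, fv v = p * (p + 1) := by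
    rw [sum_eq_sum_Icc_of_bijOn hfv]
    simpa using two_mul_sum_Icc 0 p
  have hedge : 2 * ∑ v, fe (edge v) = p * (3 * p + 1) := by
    rw [show ∑ v, fe (edge v) = _ from sum_eq_sum_Icc_of_bijOn (hfe.comp (bijOn_edge hn)),
      two_mul_sum_Icc]
    ring
  have htotal : ∑ v, (edgeSum fv (edge v) + fe (edge v)) = p * cf := by
    rw [Fintype.sum_congr _ (fun _ => cf), sum_const, card_univ, smul_eq_mul]
    rintro (a | p)
    exacts [hmagic _ _ (adj_inl_finRotate (by omega) a), hmagic _ _ (adj_inr_inl p)]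
  rw [sum_add_distrib, sum_edgeSum_edge] at htotal
  linarith

end pendantCycle

def pendantCount (n k c : ℕ) (i : Fin n) : ℕ := if (i : ℕ) = n - 1 then k + c else k

section PendantCount

variable {n k c : ℕ}

lemma val_eq_sub_one_of_le {i : Fin n} (j : Fin (pendantCount n k c i)) (hj : k ≤ j) :
    (i : ℕ) = n - 1 := by
  by_contra h
  have := j.isLt
  simp only [pendantCount, if_neg h] at this
  omega

lemma sum_pendantCount (hn : 0 < n) : ∑ i, pendantCount n k c i = n * k + c := by
  obtain ⟨n, rfl⟩ : ∃ n', n = n' + 1 := ⟨n - 1, by omega⟩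
  have hlt : ∀ i : Fin n, (i : ℕ) ≠ n := fun i => i.isLt.ne
  simp [Fin.sum_univ_castSucc, pendantCount, hlt]
  ring

lemma card_vertex (hn : 0 < n) :
    Fintype.card (Fin n ⊕ Σ i, Fin (pendantCount n k c i)) = n * (k + 1) + c := by
  simp only [Fintype.card_sum, Fintype.card_fin, Fintype.card_sigma, sum_pendantCount hn]
  ring

lemma add_mul_sum_le_sum_pendantCount_mul (hn : 0 < n) {f : Fin n → ℕ} (hf : ∀ i, 1 ≤ f i) :
    (k + 1) * ∑ i, f i + c ≤ ∑ i, (pendantCount n k c i + 1) * f i := by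
  have hterm (i : Fin n) :
      (k + 1) * f i + pendantCount n k c i ≤ (pendantCount n k c i + 1) * f i + k := by
    have hk : k ≤ pendantCount n k c i := by unfold pendantCount; split_ifs <;> omega
    nlinarith [hf i]
  have := sum_le_sum fun i (_ : i ∈ univ) => hterm i
  simp only [sum_add_distrib, ← mul_sum, sum_pendantCount hn, sum_const, card_univ,
    Fintype.card_fin, smul_eq_mul] at this
  linarith

end PendantCount

section Labelling

variable {n k c : ℕ}

def blockRank (h g : Fin n → ℕ) : Fin n ⊕ (Σ i, Fin (pendantCount n k c i)) → ℕ
  | .inl a => h a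
  | .inr ⟨i, j⟩ => if (j : ℕ) < k then n * (j + 1) + g i else n * (k + 1) + (j - k)

variable {h g : Fin n → ℕ}

lemma blockRank_lt (hh : ∀ a, h a < n) (hg : ∀ i, g i < n)
    (v : Fin n ⊕ Σ i, Fin (pendantCount n k c i)) : blockRank h g v < n * (k + 1) + c := by
  rcases v with a | ⟨i, j⟩ <;> simp only [blockRank]
  · nlinarith [hh a]
  · split_ifs with hj
    · nlinarith [Nat.mul_le_mul_left n (show (j : ℕ) + 2 ≤ k + 1 by omega), hg i]
    · have := j.isLt
      simp only [pendantCount, if_pos (val_eq_sub_one_of_le j (by omega))] at this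
      omega

lemma blockRank_injective (hh : Function.Injective h) (hg : Function.Injective g)
    (hhn : ∀ a, h a < n) (hgn : ∀ i, g i < n) :
    Function.Injective (blockRank (k := k) (c := c) h g) := by
  have hsep (i : Fin n) (j : ℕ) (hj : j < k) : n * (j + 1) + g i < n * (k + 1) := by
    nlinarith [Nat.mul_le_mul_left n (show j + 2 ≤ k + 1 by omega), hgn i]
  rintro (a | ⟨i, j⟩) (b | ⟨i', j'⟩) hab <;> simp only [blockRank] at hab
  · rw [hh hab]
  · have := hhn a
    split_ifs at hab <;> nlinarith
  · have := hhn b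
    split_ifs at hab <;> nlinarith
  · by_cases hj : (j : ℕ) < k <;> by_cases hj' : (j' : ℕ) < k <;>
      simp only [hj, hj', if_true, if_false] at hab
    · obtain ⟨hjj, hgi⟩ := eq_and_eq_of_mul_add_eq (hgn i) (hgn i') hab
      obtain rfl := hg hgi
      obtain rfl : j = j' := Fin.ext (by omega)
      rfl
    · linarith [hsep i j hj]
    · linarith [hsep i' j' hj']
    · obtain rfl : i = i' := Fin.ext <|
        (val_eq_sub_one_of_le j (by omega)).trans (val_eq_sub_one_of_le j' (by omega)).symm
      obtain rfl : j = j' := Fin.ext (by omega)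
      rfl

/-- Around the cycle `a = 0, 1, …, 2m` (where `n = 2m + 1`): `0, m + 1, 1, m + 2, …, 2m, m`. -/
def cycleRank (a : Fin n) : ℕ := if (a : ℕ) % 2 = 0 then a / 2 else n / 2 + (a + 1) / 2

def pendantShift (a : Fin n) : ℕ := n / 2 + finRotate n a - cycleRank a

lemma cycleRank_lt (ho : Odd n) (a : Fin n) : cycleRank a < n := by
  have := Nat.odd_iff.1 ho
  have := a.isLt
  unfold cycleRank
  split_ifs <;> omega

lemma cycleRank_injective (ho : Odd n) : Function.Injective (cycleRank (n := n)) := by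
  have := Nat.odd_iff.1 ho
  intro a b hab
  have := a.isLt
  have := b.isLt
  unfold cycleRank at hab
  exact Fin.ext (by split_ifs at hab <;> omega)

lemma cycleRank_of_val_eq (ho : Odd n) {a : Fin n} (ha : (a : ℕ) = n - 1) :
    cycleRank a = n / 2 := by
  have := Nat.odd_iff.1 ho
  unfold cycleRank
  split_ifs <;> omega

lemma cycleRank_add_cycleRank_finRotate (ho : Odd n) (a : Fin n) :
    cycleRank a + cycleRank (finRotate n a) = n / 2 + finRotate n a := by
  have := Nat.odd_iff.1 ho
  have := a.isLt
  unfold cycleRank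
  rw [val_finRotate]
  split_ifs <;> omega

lemma cycleRank_add_pendantShift (ho : Odd n) (a : Fin n) :
    cycleRank a + pendantShift a = n / 2 + finRotate n a := by
  have := Nat.odd_iff.1 ho
  have := a.isLt
  unfold pendantShift cycleRank
  rw [val_finRotate]
  split_ifs <;> omega

lemma pendantShift_lt (ho : Odd n) (a : Fin n) : pendantShift a < n := by
  have := Nat.odd_iff.1 ho
  have := a.isLt
  unfold pendantShift cycleRank
  rw [val_finRotate]
  split_ifs <;> omega

lemma pendantShift_injective (ho : Odd n) : Function.Injective (pendantShift (n := n)) := by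
  have := Nat.odd_iff.1 ho
  intro a b hab
  have := a.isLt
  have := b.isLt
  unfold pendantShift cycleRank at hab
  rw [val_finRotate, val_finRotate] at hab
  exact Fin.ext (by split_ifs at hab <;> omega)

def vertexLabel (n k c : ℕ) (v : Fin n ⊕ Σ i, Fin (pendantCount n k c i)) : ℕ :=
  blockRank cycleRank pendantShift v + 1

lemma edgeSum_vertexLabel_edge (ho : Odd n) (v : Fin n ⊕ Σ i, Fin (pendantCount n k c i)) :
    edgeSum (vertexLabel n k c) (pendantCycle.edge v) =
      (n + 3) / 2 + blockRank (fun a => finRotate n a) (fun a => finRotate n a) v := by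
  have := Nat.odd_iff.1 ho
  rcases v with a | ⟨i, j⟩
  · have := cycleRank_add_cycleRank_finRotate ho a
    simp only [pendantCycle.edge, edgeSum_mk, vertexLabel, blockRank]
    omega
  · have := cycleRank_add_pendantShift ho i
    simp only [pendantCycle.edge, edgeSum_mk, vertexLabel, blockRank]
    split_ifs with hj
    · omega
    · rw [cycleRank_of_val_eq ho (val_eq_sub_one_of_le j (by omega))]
      omega

theorem exists_isSEMT (hn : 3 ≤ n) (ho : Odd n) :
    ∃ fv fe, IsSEMT (pendantCycle n (pendantCount n k c)) fv fe
      (2 * (n * (k + 1) + c) + (n + 3) / 2) := by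
  have hcard : Fintype.card (Fin n ⊕ Σ i, Fin (pendantCount n k c i)) = n * (k + 1) + c :=
    card_vertex (by omega)
  have hrot_lt (a : Fin n) : (finRotate n a : ℕ) < n := (finRotate n a).isLt
  have hrot_inj : Function.Injective fun a => (finRotate n a : ℕ) :=
    Fin.val_injective.comp (finRotate n).injective
  have hbij : Set.BijOn (vertexLabel n k c) Set.univ
      (Set.Icc 1 (Fintype.card (Fin n ⊕ Σ i, Fin (pendantCount n k c i)))) := by
    refine Set.InjOn.bijOn_of_ncard_le ?_ (fun v _ => ?_) (Set.finite_Icc _ _) ?_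
    · exact fun v _ w _ h => blockRank_injective (cycleRank_injective ho)
        (pendantShift_injective ho) (cycleRank_lt ho) (pendantShift_lt ho) (Nat.succ_injective h)
    · have := blockRank_lt (c := c) (cycleRank_lt ho) (pendantShift_lt ho) v
      simp only [vertexLabel, Set.mem_Icc]
      omega
    · simp [Set.ncard_univ]
  have hinj :
      (pendantCycle n (pendantCount n k c)).edgeSet.InjOn (edgeSum (vertexLabel n k c)) := by
    intro e he e' he' h
    obtain ⟨v, -, rfl⟩ := (pendantCycle.bijOn_edge hn).surjOn he
    obtain ⟨w, -, rfl⟩ := (pendantCycle.bijOn_edge hn).surjOn he'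
    rw [edgeSum_vertexLabel_edge ho, edgeSum_vertexLabel_edge ho] at h
    exact congrArg _ (blockRank_injective hrot_inj hrot_inj hrot_lt hrot_lt (by omega))
  have hmaps : Set.MapsTo (edgeSum (vertexLabel n k c))
      (pendantCycle n (pendantCount n k c)).edgeSet
      (Set.Ico ((n + 3) / 2)
        ((n + 3) / 2 + (pendantCycle n (pendantCount n k c)).edgeSet.ncard)) := by
    intro e he
    obtain ⟨v, -, rfl⟩ := (pendantCycle.bijOn_edge hn).surjOn he
    have := blockRank_lt (c := c) hrot_lt hrot_lt v
    rw [pendantCycle.ncard_edgeSet hn, hcard, edgeSum_vertexLabel_edge ho, Set.mem_Ico]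
    omega
  obtain ⟨fe, hfe⟩ := exists_isSEMT_of_edgeSum hbij hinj hmaps
  rw [pendantCycle.ncard_edgeSet hn, hcard] at hfe
  exact ⟨_, fe, by rwa [two_mul]⟩

end Labelling

theorem le_of_isSEMT {n k c : ℕ} (hn : 3 ≤ n) (ho : Odd n) (hub : c * (n - 3) < 2 * n * (k + 1))
    {fv : Fin n ⊕ (Σ i, Fin (pendantCount n k c i)) → ℕ}
    {fe : Sym2 (Fin n ⊕ Σ i, Fin (pendantCount n k c i)) → ℕ} {cf : ℕ}
    (h : IsSEMT (pendantCycle n (pendantCount n k c)) fv fe cf) :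
    2 * (n * (k + 1) + c) + (n + 3) / 2 ≤ cf := by
  have hpos (v) : 1 ≤ fv v := (h.1.mapsTo (Set.mem_univ v)).1
  have hcount := pendantCycle.card_mul_eq_of_isSEMT hn h
  rw [card_vertex (by omega)] at hcount
  have hweight := add_mul_sum_le_sum_pendantCount_mul (k := k) (c := c) (by omega)
    fun i => hpos (.inl i)
  have hcycle := card_mul_succ_le_two_mul_sum_of_injective (f := fun i => fv (.inl i))
    (fun a b hab => Sum.inl_injective (h.1.injOn trivial trivial hab))
    fun v => Nat.one_le_iff_ne_zero.1 (hpos (.inl v))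
  rw [Fintype.card_fin] at hcycle
  obtain ⟨m, rfl⟩ := ho
  set B := (2 * m + 1) * (k + 1) with hB
  set S := ∑ i, fv (.inl i)
  set X := ∑ i, (pendantCount (2 * m + 1) k c i + 1) * fv (.inl i)
  have hub' : c * (2 * m) < 2 * B + 2 * c := by
    rw [show 2 * m = (2 * m + 1 - 3) + 2 by omega, mul_add]
    linarith
  by_contra! hlt
  have hcf : cf ≤ 2 * (B + c) + m + 1 := by omega
  have hX : X ≤ (B + c) * m := by nlinarith [Nat.mul_le_mul_left (B + c) hcf]
  have hS : B * (2 * m + 2) ≤ 2 * (k + 1) * S := by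
    nlinarith [Nat.mul_le_mul_left (k + 1) hcycle]
  nlinarith

theorem stmt_9_general (n k c : ℕ) (hn : 3 ≤ n) (ho : Odd n)
    (hub : c * (n - 3) < 2 * n * (k + 1)) :
    (∃ fv fe cf,
        IsSEMT (pendantCycle n (fun i => if i.val = n - 1 then k + c else k)) fv fe cf) ∧
    sInf {cf | ∃ fv fe,
        IsSEMT (pendantCycle n (fun i => if i.val = n - 1 then k + c else k)) fv fe cf} =
      2 * n * (k + 1) + 2 * c + (n + 3) / 2 := by
  obtain ⟨fv, fe, hsemt⟩ := exists_isSEMT (k := k) (c := c) hn ho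
  refine ⟨⟨fv, fe, _, hsemt⟩, ?_⟩
  rw [show 2 * n * (k + 1) + 2 * c = 2 * (n * (k + 1) + c) by ring]
  exact IsLeast.csInf_eq ⟨⟨fv, fe, hsemt⟩, fun cf ⟨_, _, h⟩ => le_of_isSEMT hn ho hub h⟩

/-- `G_{n,k,c}`: odd cycle `a₁,…,aₙ` with `k` pendants at `a₁,…,a_{n-1}` and `k+c` pendants at
`aₙ`. For `1 ≤ c < 2n(k+1)/(n-3)` (i.e. `c(n-3) < 2n(k+1)`; no constraint when `n = 3`),
it is super edge-magic total with strength `2n(k+1) + 2c + (n+3)/2`. -/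
theorem stmt_9 (n k c : ℕ) (hn : 3 ≤ n) (ho : Odd n) (hc : 1 ≤ c)
    (hub : c * (n - 3) < 2 * n * (k + 1)) :
    (∃ fv fe cf,
        IsSEMT (pendantCycle n (fun i => if i.val = n - 1 then k + c else k)) fv fe cf) ∧
    sInf {cf | ∃ fv fe,
        IsSEMT (pendantCycle n (fun i => if i.val = n - 1 then k + c else k)) fv fe cf} =
      2 * n * (k + 1) + 2 * c + (n + 3) / 2 :=
  stmt_9_general n k c hn ho hub
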